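/- arXiv:2207.07156 — 5 statements merged into one kernel-verified Lean document; each statement's English description precedes it below -/
import Mathlib

section
/- For every natural number n ≥ 1, there exist subsets A_1, A_2, ..., A_n of {1, 2, ..., n} such that |A_q| = φ(q) for each q (where φ is Euler's totient function), and whenever lcm(q, q') ≤ n with q ≠ q', the sets A_q and A_{q'} are disjoint. -/
/-!
Take `A q = {⌈n a / q⌉ : 1 ≤ a ≤ q, gcd(a, q) = 1}`. Distinct reduced fractions `a / q ≠ a' / q'`
differ by at least `1 / lcm(q, q')`, which is at least `1 / n` when `lcm(q, q') ≤ n`. So the points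
`n a / q` and `n a' / q'` are at least `1` apart and have distinct ceilings: this gives both the
injectivity of `a ↦ ⌈n a / q⌉` (case `q = q'`) and the disjointness.
-/

open Finset

lemma card_filter_coprime_Icc (q : ℕ) : #{a ∈ Icc 1 q | q.Coprime a} = q.totient := by
  rw [← Nat.filter_coprime_Ico_eq_totient q 1, show Ico 1 (1 + q) = Icc 1 q by
    ext a
    simp only [mem_Icc, mem_Ico]
    omega]

lemma abs_sub_lt_one_of_natCeil_eq {α : Type*} [CommRing α] [LinearOrder α] [IsStrictOrderedRing α]
    [FloorSemiring α] {x y : α} (hx : 0 ≤ x) (hy : 0 ≤ y) (h : ⌈x⌉₊ = ⌈y⌉₊) : |x - y| < 1 := by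
  have hx₁ := Nat.ceil_lt_add_one hx
  have hx₂ := Nat.le_ceil x
  have hy₁ := Nat.ceil_lt_add_one hy
  have hy₂ := Nat.le_ceil y
  rw [h] at hx₁ hx₂
  rw [abs_sub_lt_iff]
  constructor <;> linarith

lemma one_le_lcm_mul_abs_sub_div {a a' : ℤ} {q q' : ℕ} (hq : q ≠ 0) (hq' : q' ≠ 0)
    (hne : (a / q : ℚ) ≠ a' / q') : 1 ≤ (q.lcm q' : ℚ) * |(a / q : ℚ) - a' / q'| := by
  obtain ⟨k, hk⟩ := Nat.dvd_lcm_left q q'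
  obtain ⟨k', hk'⟩ := Nat.dvd_lcm_right q q'
  have hL : (q.lcm q' : ℚ) * (a / q - a' / q') = ((a * k - a' * k' : ℤ) : ℚ) := by
    have hkq : (q.lcm q' : ℚ) = q * k := by exact_mod_cast hk
    have hkq' : (q.lcm q' : ℚ) = q' * k' := by exact_mod_cast hk'
    have e : (q.lcm q' : ℚ) * (a / q) = a * k := by rw [hkq]; field_simp
    have e' : (q.lcm q' : ℚ) * (a' / q') = a' * k' := by rw [hkq']; field_simp
    rw [mul_sub, e, e']
    push_cast
    ring
  have hm : a * k - a' * k' ≠ 0 := by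
    intro h0
    rw [h0, Int.cast_zero, mul_eq_zero, sub_eq_zero] at hL
    exact hL.elim (fun h => Nat.lcm_ne_zero hq hq' (by exact_mod_cast h)) hne
  calc (1 : ℚ) ≤ ((|a * k - a' * k'| : ℤ) : ℚ) := by exact_mod_cast Int.one_le_abs hm
    _ = _ := by rw [Int.cast_abs, ← hL, abs_mul, abs_of_nonneg (Nat.cast_nonneg _)]

lemma eq_of_natCeil_mul_div_eq {n q q' a a' : ℕ} (hq : 0 < q) (hq' : 0 < q')
    (ha : q.Coprime a) (ha' : q'.Coprime a') (hlcm : q.lcm q' ≤ n)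
    (h : ⌈(n * a / q : ℚ)⌉₊ = ⌈(n * a' / q' : ℚ)⌉₊) : q = q' ∧ a = a' := by
  by_contra hne
  have hfrac : ((a : ℤ) / (q : ℤ) : ℚ) ≠ (a' : ℤ) / (q' : ℤ) := by
    intro heq
    have := Rat.div_int_inj (by exact_mod_cast hq) (by exact_mod_cast hq')
      (by simpa using ha.symm) (by simpa using ha'.symm) heq
    omega
  have hsep := one_le_lcm_mul_abs_sub_div hq.ne' hq'.ne' hfrac
  have hclose := abs_sub_lt_one_of_natCeil_eq (by positivity) (by positivity) h
  have hn : (q.lcm q' : ℚ) ≤ n := by exact_mod_cast hlcm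
  rw [mul_div_assoc, mul_div_assoc, ← mul_sub, abs_mul, Nat.abs_cast] at hclose
  push_cast at hsep
  exact (hsep.trans (mul_le_mul_of_nonneg_right hn (abs_nonneg _))).not_gt hclose

lemma natCeil_mul_div_mem_Icc {n q a : ℕ} (hn : 0 < n) (ha : 0 < a) (haq : a ≤ q) :
    ⌈(n * a / q : ℚ)⌉₊ ∈ Icc 1 n := by
  have hq : (0 : ℚ) < q := by exact_mod_cast ha.trans_le haq
  rw [mem_Icc, Nat.one_le_ceil_iff, Nat.ceil_le, div_le_iff₀ hq]
  constructor
  · positivity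
  · exact mul_le_mul_of_nonneg_left (by exact_mod_cast haq) (Nat.cast_nonneg n)

theorem stmt_0_general (n : ℕ) :
    ∃ A : ℕ → Finset ℕ,
      (∀ q ∈ Finset.Icc 1 n, A q ⊆ Finset.Icc 1 n ∧ (A q).card = Nat.totient q) ∧
      (∀ q ∈ Finset.Icc 1 n, ∀ q' ∈ Finset.Icc 1 n,
        q ≠ q' → Nat.lcm q q' ≤ n → Disjoint (A q) (A q')) := by
  refine ⟨fun q => {a ∈ Icc 1 q | q.Coprime a}.image fun a : ℕ => ⌈(n * a / q : ℚ)⌉₊,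
    fun q hq => ⟨?_, ?_⟩, fun q hq q' hq' hne hlcm => ?_⟩ <;> simp only [mem_Icc] at *
  · intro c hc
    obtain ⟨a, ha, rfl⟩ := mem_image.mp hc
    simp only [mem_filter, mem_Icc] at ha
    exact natCeil_mul_div_mem_Icc (by omega) (by omega) ha.1.2
  · rw [card_image_of_injOn, card_filter_coprime_Icc]
    intro a ha a' ha' h
    simp only [coe_filter, Set.mem_ofPred_eq] at ha ha'
    exact (eq_of_natCeil_mul_div_eq (by omega) (by omega) ha.2 ha'.2
      (by rw [Nat.lcm_self]; omega) h).2
  · rw [disjoint_left]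
    rintro c hc hc'
    obtain ⟨a, ha, rfl⟩ := mem_image.mp hc
    obtain ⟨a', ha', h⟩ := mem_image.mp hc'
    simp only [mem_filter] at ha ha'
    exact hne (eq_of_natCeil_mul_div_eq (by omega) (by omega) ha.2 ha'.2 hlcm h.symm).1

theorem stmt_0 (n : ℕ) (hn : 1 ≤ n) :
    ∃ A : ℕ → Finset ℕ,
      (∀ q ∈ Finset.Icc 1 n, A q ⊆ Finset.Icc 1 n ∧ (A q).card = Nat.totient q) ∧
      (∀ q ∈ Finset.Icc 1 n, ∀ q' ∈ Finset.Icc 1 n,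
        q ≠ q' → Nat.lcm q q' ≤ n → Disjoint (A q) (A q')) :=
  stmt_0_general n
end

section
/- Let n be a positive natural number, and let p/q and p'/q' be two distinct fractions in lowest terms in the interval (0,1] with q, q' ≤ n. If ⌈np/q⌉ = ⌈np'/q'⌉, then lcm(q, q') > n. -/
/-!
If `lcm q q' ≤ n`, the two fractions are distinct multiples of `1 / lcm q q'`, so `n p / q` and
`n p' / q'` are at distance at least `n / lcm q q' ≥ 1` and cannot have the same ceiling.
-/

namespace Int

variable {R : Type*} [CommRing R] [LinearOrder R] [IsStrictOrderedRing R] [FloorRing R] {a b : R}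

theorem ceil_lt_ceil_of_add_one_le (h : a + 1 ≤ b) : ⌈a⌉ < ⌈b⌉ :=
  calc ⌈a⌉ < ⌈a⌉ + 1 := lt_add_one _
    _ = ⌈a + 1⌉ := (ceil_add_one a).symm
    _ ≤ ⌈b⌉ := ceil_le_ceil h

theorem ceil_ne_ceil_of_one_le_abs_sub (h : 1 ≤ |a - b|) : ⌈a⌉ ≠ ⌈b⌉ := by
  rcases le_abs'.mp h with h | h
  · exact (ceil_lt_ceil_of_add_one_le (by linarith)).ne
  · exact (ceil_lt_ceil_of_add_one_le (by linarith)).ne'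

end Int

section

variable {K : Type*} [Field K] [LinearOrder K] [IsStrictOrderedRing K]

theorem one_le_lcm_mul_abs_div_sub_div (p p' : ℤ) {q q' : ℕ} (hq : q ≠ 0) (hq' : q' ≠ 0)
    (hne : (p : K) / q ≠ p' / q') :
    1 ≤ (Nat.lcm q q' : K) * |(p : K) / q - p' / q'| := by
  set L := Nat.lcm q q'
  have hqK : (q : K) ≠ 0 := Nat.cast_ne_zero.mpr hq
  have hq'K : (q' : K) ≠ 0 := Nat.cast_ne_zero.mpr hq'
  have hqL : q ∣ L := Nat.dvd_lcm_left q q'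
  have hq'L : q' ∣ L := Nat.dvd_lcm_right q q'
  set m : ℤ := p * (L / q : ℕ) - p' * (L / q' : ℕ)
  have hm : (L : K) * (p / q - p' / q') = m := by
    simp only [m, Int.cast_sub, Int.cast_mul, Int.cast_natCast,
      Nat.cast_div hqL hqK, Nat.cast_div hq'L hq'K]
    ring
  have hm0 : m ≠ 0 := by
    rintro hm0
    rw [hm0, Int.cast_zero, mul_eq_zero, sub_eq_zero] at hm
    exact hne (hm.resolve_left (Nat.cast_ne_zero.mpr (Nat.lcm_ne_zero hq hq')))
  rw [← Nat.abs_cast (R := K) L, ← abs_mul, hm]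
  exact_mod_cast Int.one_le_abs hm0

end

theorem stmt_1_general (n p q p' q' : ℕ)
    (hq : 1 ≤ q) (hq' : 1 ≤ q')
    (hne : (p : ℚ) / q ≠ (p' : ℚ) / q')
    (hceil : ⌈(n : ℚ) * p / q⌉ = ⌈(n : ℚ) * p' / q'⌉) :
    n < Nat.lcm q q' := by
  by_contra! hle
  have hsep := one_le_lcm_mul_abs_div_sub_div (K := ℚ) p p' (by omega : q ≠ 0) (by omega : q' ≠ 0)
    (by simpa only [Int.cast_natCast] using hne)
  have hdist : 1 ≤ |(n : ℚ) * p / q - n * p' / q'| := by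
    rw [mul_div_assoc, mul_div_assoc, ← mul_sub, abs_mul, Nat.abs_cast]
    exact hsep.trans (mul_le_mul_of_nonneg_right (by exact_mod_cast hle) (abs_nonneg _))
  exact Int.ceil_ne_ceil_of_one_le_abs_sub hdist hceil

theorem stmt_1 (n p q p' q' : ℕ) (hn : 1 ≤ n)
    (hq : 1 ≤ q) (hqn : q ≤ n) (hq' : 1 ≤ q') (hq'n : q' ≤ n)
    (hp : 1 ≤ p) (hpq : p ≤ q) (hp' : 1 ≤ p') (hp'q' : p' ≤ q')
    (hcop : Nat.Coprime p q) (hcop' : Nat.Coprime p' q')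
    (hne : (p : ℚ) / q ≠ (p' : ℚ) / q')
    (hceil : ⌈(n : ℚ) * p / q⌉ = ⌈(n : ℚ) * p' / q'⌉) :
    n < Nat.lcm q q' :=
  stmt_1_general n p q p' q' hq hq' hne hceil
end

section
/- The clique number of the enhanced power graph of a finite group G equals the maximum order of an element of G. -/
def enhancedPowerGraph (G : Type*) [Group G] : SimpleGraph G where
  Adj x y := x ≠ y ∧ IsCyclic (Subgroup.closure {x, y} : Subgroup G)
  symm := by
    constructor
    intro x y ⟨hne, hc⟩
    exact ⟨hne.symm, by rwa [Set.pair_comm]⟩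
  loopless := by constructor; intro x ⟨hne, _⟩; exact hne rfl

/-!
The elements of a cyclic subgroup `⟨g⟩` are pairwise adjacent, so the clique number is at least
the maximal element order. Conversely, the elements of a clique `t` commute pairwise, so the
abelian group they generate contains an element `z` whose order `L` is divisible by the order of
every element of `t`. Two elements of `t` of the same order `n` generate a common cyclic group,
hence the same subgroup of order `n`; so `t` has at most `φ n` elements of order `n`, and
`#t ≤ ∑ n ∣ L, φ n = L`.
-/

open Subgroup Finset

theorem IsCyclic.zpowers_eq_zpowers_of_orderOf_eq {C : Type*} [Group C] [IsCyclic C] [Finite C]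
    {x y : C} (h : orderOf x = orderOf y) : zpowers x = zpowers y := by
  let _ := IsCyclic.commGroup (α := C)
  -- in a cyclic group the `n`-torsion has at most `n` elements, so `⟨z⟩` is all of it
  have zpowers_eq_ker (z : C) : zpowers z = (powMonoidHom (orderOf z) : C →* C).ker :=
    eq_of_le_of_card_ge (zpowers_le.mpr (pow_orderOf_eq_one z))
      (by rw [IsCyclic.card_powMonoidHom_ker, Nat.card_zpowers]
          exact Nat.gcd_le_right _ (orderOf_pos z))
  rw [zpowers_eq_ker x, zpowers_eq_ker y, h]

section

variable {G : Type*} [Group G]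

theorem Commute.of_isCyclic_closure_pair {x y : G} (hc : IsCyclic (closure {x, y})) :
    Commute x y :=
  setLike_mul_comm (subset_closure (Set.mem_insert x {y}))
    (subset_closure (Set.mem_insert_of_mem x rfl))

theorem mem_zpowers_of_isCyclic_closure_pair [Finite G] {x y : G}
    (hc : IsCyclic (closure {x, y})) (h : orderOf x = orderOf y) : x ∈ zpowers y := by
  let x' : closure {x, y} := ⟨x, subset_closure (Set.mem_insert x {y})⟩
  let y' : closure {x, y} := ⟨y, subset_closure (Set.mem_insert_of_mem x rfl)⟩
  have hx' : x' ∈ zpowers y' := by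
    have hxy' : orderOf x' = orderOf y' := by simpa [x', y'] using h
    rw [← IsCyclic.zpowers_eq_zpowers_of_orderOf_eq hxy']
    exact mem_zpowers x'
  obtain ⟨k, hk⟩ := hx'
  exact ⟨k, congrArg Subtype.val hk⟩

theorem exists_forall_orderOf_dvd_of_pairwise_commute [Finite G] {S : Set G}
    (hS : ∀ x ∈ S, ∀ y ∈ S, Commute x y) :
    ∃ z : G, ∀ s ∈ S, orderOf s ∣ orderOf z := by
  have := isMulCommutative_closure hS
  open scoped IsMulCommutative in
  obtain ⟨z, hz⟩ := Monoid.exists_orderOf_eq_exponent (G := closure S) .of_finite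
  refine ⟨z, fun s hs => ?_⟩
  rw [orderOf_coe, hz, ← orderOf_mk s (subset_closure hs)]
  exact Monoid.order_dvd_exponent _

theorem card_filter_orderOf_eq_le_totient [Finite G] {t : Finset G}
    (ht : ∀ x ∈ t, ∀ y ∈ t, IsCyclic (closure {x, y})) (n : ℕ) :
    #{s ∈ t | orderOf s = n} ≤ n.totient := by
  classical
  rcases ({s ∈ t | orderOf s = n} : Finset G).eq_empty_or_nonempty with hempty | ⟨s₀, hs₀⟩
  · simp [hempty]
  · rw [mem_filter] at hs₀
    let _ : Fintype (zpowers s₀) := Fintype.ofFinite _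
    have hsub : {s ∈ t | orderOf s = n} ⊆
        ({a : zpowers s₀ | orderOf a = n} : Finset _).map (Function.Embedding.subtype _) := by
      intro s hs
      rw [mem_filter] at hs
      have hs_mem :=
        mem_zpowers_of_isCyclic_closure_pair (ht s hs.1 s₀ hs₀.1) (hs.2.trans hs₀.2.symm)
      exact mem_map.mpr ⟨⟨s, hs_mem⟩, by simpa [orderOf_mk] using hs.2, rfl⟩
    calc #{s ∈ t | orderOf s = n}
        ≤ #{a : zpowers s₀ | orderOf a = n} := (card_le_card hsub).trans_eq (card_map _)
      _ = n.totient := IsCyclic.card_orderOf_eq_totient <| by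
          rw [← Nat.card_eq_fintype_card, Nat.card_zpowers, hs₀.2]

theorem exists_card_le_orderOf [Finite G] {t : Finset G}
    (ht : ∀ x ∈ t, ∀ y ∈ t, IsCyclic (closure {x, y})) : ∃ z : G, #t ≤ orderOf z := by
  obtain ⟨z, hz⟩ := exists_forall_orderOf_dvd_of_pairwise_commute (S := t)
    fun x hx y hy => .of_isCyclic_closure_pair (ht x hx y hy)
  refine ⟨z, ?_⟩
  have himage : t.image orderOf ⊆ (orderOf z).divisors := fun n hn => by
    obtain ⟨s, hs, rfl⟩ := mem_image.mp hn
    exact Nat.mem_divisors.mpr ⟨hz s hs, (orderOf_pos z).ne'⟩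
  calc #t = ∑ n ∈ t.image orderOf, #{s ∈ t | orderOf s = n} := card_eq_sum_card_image _ t
    _ ≤ ∑ n ∈ t.image orderOf, n.totient :=
        sum_le_sum fun n _ => card_filter_orderOf_eq_le_totient ht n
    _ ≤ ∑ n ∈ (orderOf z).divisors, n.totient := sum_le_sum_of_subset himage
    _ = orderOf z := Nat.sum_totient _

namespace enhancedPowerGraph

theorem isCyclic_closure_pair_of_isClique {s : Set G} (hs : (enhancedPowerGraph G).IsClique s)
    {x y : G} (hx : x ∈ s) (hy : y ∈ s) : IsCyclic (closure {x, y}) := by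
  obtain rfl | hxy := eq_or_ne x y
  · rw [Set.pair_eq_singleton, ← zpowers_eq_closure]
    infer_instance
  · exact (hs hx hy hxy).2

theorem isClique_zpowers (g : G) : (enhancedPowerGraph G).IsClique (zpowers g : Set G) :=
  fun _ hx _ hy hxy => ⟨hxy, isCyclic_of_le ((closure_le _).mpr (Set.pair_subset hx hy))⟩

theorem orderOf_le_cliqueNum [Finite G] (g : G) :
    orderOf g ≤ (enhancedPowerGraph G).cliqueNum := by
  classical
  let _ : Fintype G := Fintype.ofFinite G
  have hclique := isClique_zpowers g
  rw [← Set.coe_toFinset (zpowers g : Set G)] at hclique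
  calc orderOf g = #(zpowers g : Set G).toFinset := by
        rw [Set.toFinset_card, ← Nat.card_eq_fintype_card, SetLike.coe_sort_coe, Nat.card_zpowers]
    _ ≤ _ := SimpleGraph.IsClique.card_le_cliqueNum (tc := hclique)

theorem exists_cliqueNum_le_orderOf [Finite G] :
    ∃ z : G, (enhancedPowerGraph G).cliqueNum ≤ orderOf z := by
  obtain ⟨t, ht⟩ := (enhancedPowerGraph G).exists_isNClique_cliqueNum
  rw [← ht.card_eq]
  exact exists_card_le_orderOf fun x hx y hy =>
    isCyclic_closure_pair_of_isClique ht.isClique (mem_coe.mpr hx) (mem_coe.mpr hy)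

end enhancedPowerGraph

end

theorem stmt_6 {G : Type*} [Group G] [Fintype G] :
    (enhancedPowerGraph G).cliqueNum = Finset.univ.sup (fun g : G => orderOf g) := by
  obtain ⟨z, hz⟩ := enhancedPowerGraph.exists_cliqueNum_le_orderOf (G := G)
  exact le_antisymm (hz.trans (le_sup (mem_univ z)))
    (Finset.sup_le fun g _ => enhancedPowerGraph.orderOf_le_cliqueNum g)
end

section
/- Let G be a finite group and Δ(G) the graph on G where x ~ y iff ⟨x,y⟩ is cyclic and neither is a power of the other. Then the clique number of Δ(G) equals max over n in Ω(G) of α(n), where Ω(G) is the set of element orders of G and α(n) is the maximum size of an antichain in the divisor lattice of n. -/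
def deltaGraph (G : Type*) [Group G] : SimpleGraph G where
  Adj x y := x ≠ y ∧ IsCyclic (Subgroup.closure {x, y} : Subgroup G) ∧
    x ∉ Subgroup.zpowers y ∧ y ∉ Subgroup.zpowers x
  symm := by
    constructor
    intro x y ⟨hne, hc, hxy, hyx⟩
    exact ⟨hne.symm, by rwa [Set.pair_comm], hyx, hxy⟩
  loopless := by constructor; intro x ⟨hne, _⟩; exact hne rfl

/-- `α n`: the maximum size of an antichain (under divisibility) in the divisor
lattice of `n`. -/
noncomputable def maxDivisorAntichain (n : ℕ) : ℕ :=
  sSup {k | ∃ A : Finset ℕ, ↑A ⊆ {d | d ∣ n} ∧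
    IsAntichain (· ∣ ·) (A : Set ℕ) ∧ A.card = k}

/-!
Inside a cyclic group `⟨g⟩`, `x ∈ ⟨y⟩` holds exactly when `|x|` divides `|y|`, so there `Δ` is the
non-divisibility graph on element orders, and an antichain of divisors of `|g|` yields a clique
`{g ^ (|g| / d)}` of the same size. Conversely, a clique is a set whose elements pairwise generate
cyclic subgroups, and such a set generates a cyclic subgroup: its elements commute, and in the
abelian group they generate every Sylow `p`-subgroup is the image of the `p'`-power map, which is
generated by `p`-elements lying pairwise in cyclic groups, i.e. by a chain of cyclic subgroups.
An abelian group all of whose Sylow subgroups are cyclic is cyclic, so the clique lies in some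
`⟨g⟩`, where its orders form an antichain of divisors of `|g|`.
-/

open Subgroup

section
variable {n : ℕ}

theorem bddAbove_card_divisor_antichains (hn : n ≠ 0) :
    BddAbove {k | ∃ A : Finset ℕ, ↑A ⊆ {d | d ∣ n} ∧ IsAntichain (· ∣ ·) (A : Set ℕ) ∧
      A.card = k} := by
  refine ⟨n.divisors.card, ?_⟩
  rintro k ⟨A, hA, -, rfl⟩
  exact Finset.card_le_card fun d hd => Nat.mem_divisors.mpr ⟨hA hd, hn⟩

theorem exists_antichain_card_eq_maxDivisorAntichain (hn : n ≠ 0) :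
    ∃ A : Finset ℕ, ↑A ⊆ {d | d ∣ n} ∧ IsAntichain (· ∣ ·) (A : Set ℕ) ∧
      A.card = maxDivisorAntichain n :=
  Nat.sSup_mem (by exact ⟨0, ∅, by simp, by simp [IsAntichain], rfl⟩)
    (bddAbove_card_divisor_antichains hn)

theorem card_le_maxDivisorAntichain (hn : n ≠ 0) {A : Finset ℕ} (hA : ↑A ⊆ {d | d ∣ n})
    (hanti : IsAntichain (· ∣ ·) (A : Set ℕ)) : A.card ≤ maxDivisorAntichain n :=
  le_csSup (bddAbove_card_divisor_antichains hn) ⟨A, hA, hanti, rfl⟩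

end

theorem IsCyclic.mem_zpowers_of_orderOf_dvd {α : Type*} [Group α] [Finite α] [IsCyclic α]
    {a b : α} (h : orderOf a ∣ orderOf b) : a ∈ zpowers b := by
  classical
  have := Fintype.ofFinite α
  -- In a cyclic group `x ^ n = 1` has at most `n` solutions; `zpowers b` supplies `orderOf b`.
  have hzpowers : (zpowers b : Set α).toFinset = Finset.univ.filter (· ^ orderOf b = 1) := by
    refine Finset.eq_of_subset_of_card_le (fun x hx => ?_) ?_
    · simpa [orderOf_dvd_iff_pow_eq_one] using
        orderOf_dvd_of_mem_zpowers (Set.mem_toFinset.mp hx)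
    · rw [Set.toFinset_card, ← Nat.card_eq_fintype_card, SetLike.coe_sort_coe, Nat.card_zpowers]
      exact IsCyclic.card_pow_eq_one_le (orderOf_pos b)
  have ha : a ∈ (zpowers b : Set α).toFinset := by
    rw [hzpowers]
    simpa using orderOf_dvd_iff_pow_eq_one.mp h
  simpa using ha

theorem Subgroup.mem_zpowers_of_orderOf_dvd {G : Type*} [Group G] {H : Subgroup G} [Finite H]
    [IsCyclic H] {x y : G} (hx : x ∈ H) (hy : y ∈ H) (h : orderOf x ∣ orderOf y) :
    x ∈ zpowers y := by
  obtain ⟨k, hk⟩ := mem_zpowers_iff.mp <| IsCyclic.mem_zpowers_of_orderOf_dvd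
    (a := (⟨x, hx⟩ : H)) (b := ⟨y, hy⟩) (by simpa only [orderOf_mk] using h)
  exact mem_zpowers_iff.mpr ⟨k, congrArg Subtype.val hk⟩

section
variable {G : Type*} [Group G] [Finite G]

theorem isCyclic_closure_of_pairwise_of_pow_prime_pow_eq_one {p k : ℕ} (hp : p.Prime)
    {T : Set G} (hT : ∀ x ∈ T, x ^ p ^ k = 1)
    (hpair : ∀ x ∈ T, ∀ y ∈ T, IsCyclic (closure {x, y})) : IsCyclic (closure T) := by
  rcases T.eq_empty_or_nonempty with rfl | hne
  · rw [Subgroup.closure_empty]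
    infer_instance
  obtain ⟨b, hb, hmax⟩ := Set.exists_max_image T orderOf T.toFinite hne
  refine isCyclic_of_le (H' := zpowers b) ((closure_le _).mpr fun a ha => ?_)
  have hdvd : orderOf a ∣ orderOf b := by
    obtain ⟨i, -, hi⟩ := (Nat.dvd_prime_pow hp).mp (orderOf_dvd_of_pow_eq_one (hT a ha))
    obtain ⟨j, -, hj⟩ := (Nat.dvd_prime_pow hp).mp (orderOf_dvd_of_pow_eq_one (hT b hb))
    have hij := hmax a ha
    rw [hi, hj] at hij ⊢
    exact pow_dvd_pow p ((Nat.pow_le_pow_iff_right hp.one_lt).mp hij)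
  have := hpair a ha b hb
  exact mem_zpowers_of_orderOf_dvd (H := closure {a, b}) (subset_closure (by simp))
    (subset_closure (by simp)) hdvd

theorem isCyclic_of_closure_eq_top_of_pairwise {H : Type*} [CommGroup H] [Finite H] {S : Set H}
    (hS : closure S = ⊤) (hpair : ∀ x ∈ S, ∀ y ∈ S, IsCyclic (closure {x, y})) :
    IsCyclic H := by
  suffices IsZGroup H from inferInstance
  refine ⟨fun p hp P => ?_⟩
  have := Fact.mk hp
  let φ : H →* H := powMonoidHom (ordCompl[p] (Nat.card H))
  have hrange : φ.range = closure (φ '' S) := by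
    rw [MonoidHom.range_eq_map, ← hS, MonoidHom.map_closure]
  have hP : P.1 ≤ φ.range := fun g hg => by
    have hcop : (Nat.card P).Coprime (ordCompl[p] (Nat.card H)) := by
      rw [P.card_eq_multiplicity]
      exact (Nat.coprime_ordCompl hp Nat.card_pos.ne').pow_left _
    exact ⟨(powCoprime hcop).symm ⟨g, hg⟩,
      congrArg Subtype.val ((powCoprime hcop).apply_symm_apply ⟨g, hg⟩)⟩
  have : IsCyclic φ.range := by
    rw [hrange]
    refine isCyclic_closure_of_pairwise_of_pow_prime_pow_eq_one hp
      (k := (Nat.card H).factorization p) ?_ ?_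
    · rintro _ ⟨x, -, rfl⟩
      rw [powMonoidHom_apply, ← pow_mul, mul_comm, Nat.ordProj_mul_ordCompl_eq_self,
        pow_card_eq_one']
    · rintro _ ⟨x, hx, rfl⟩ _ ⟨y, hy, rfl⟩
      have := hpair x hx y hy
      refine isCyclic_of_le (H' := closure {x, y}) ((closure_le _).mpr ?_)
      rintro _ (rfl | rfl) <;> exact pow_mem (subset_closure (by simp)) _
  exact isCyclic_of_le hP

theorem isCyclic_closure_of_pairwise {S : Set G}
    (hpair : ∀ x ∈ S, ∀ y ∈ S, IsCyclic (closure {x, y})) : IsCyclic (closure S) := by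
  have hcomm : ∀ x ∈ S, ∀ y ∈ S, x * y = y * x := fun x hx y hy => by
    have := hpair x hx y hy
    exact congrArg Subtype.val (mul_comm' (⟨x, subset_closure (by simp)⟩ : closure {x, y})
      ⟨y, subset_closure (by simp)⟩)
  have := isMulCommutative_closure hcomm
  open scoped IsMulCommutative in
  refine isCyclic_of_closure_eq_top_of_pairwise closure_closure_coe_preimage fun x hx y hy => ?_
  have := hpair x hx y hy
  have e := equivMapOfInjective (closure {x, y}) (closure S).subtype (subtype_injective _)
  rw [MonoidHom.map_closure, Set.image_pair] at e
  exact e.symm.isCyclic.mp this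

theorem deltaGraph_adj_iff_of_mem_zpowers {g x y : G} (hx : x ∈ zpowers g)
    (hy : y ∈ zpowers g) :
    (deltaGraph G).Adj x y ↔ ¬ orderOf x ∣ orderOf y ∧ ¬ orderOf y ∣ orderOf x := by
  have hxy : x ∈ zpowers y ↔ orderOf x ∣ orderOf y :=
    ⟨orderOf_dvd_of_mem_zpowers, mem_zpowers_of_orderOf_dvd hx hy⟩
  have hyx : y ∈ zpowers x ↔ orderOf y ∣ orderOf x :=
    ⟨orderOf_dvd_of_mem_zpowers, mem_zpowers_of_orderOf_dvd hy hx⟩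
  refine ⟨fun ⟨_, _, h₁, h₂⟩ => ⟨hxy.not.mp h₁, hyx.not.mp h₂⟩, fun ⟨h₁, h₂⟩ => ?_⟩
  refine ⟨fun h => h₁ (h ▸ dvd_rfl), ?_, hxy.not.mpr h₁, hyx.not.mpr h₂⟩
  refine isCyclic_of_le (H' := zpowers g) ((closure_le _).mpr ?_)
  rintro _ (rfl | rfl) <;> assumption

theorem exists_subset_zpowers_of_isClique {s : Set G} (hs : (deltaGraph G).IsClique s) :
    ∃ g : G, s ⊆ zpowers g := by
  have : IsCyclic (closure s) := isCyclic_closure_of_pairwise fun x hx y hy => by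
    rcases eq_or_ne x y with rfl | hne
    · rw [Set.pair_eq_singleton, ← zpowers_eq_closure]
      infer_instance
    · exact (hs hx hy hne).2.1
  obtain ⟨g, hg⟩ := IsCyclic.exists_generator (α := closure s)
  refine ⟨g, fun x hx => ?_⟩
  obtain ⟨k, hk⟩ := mem_zpowers_iff.mp (hg ⟨x, subset_closure hx⟩)
  exact mem_zpowers_iff.mpr ⟨k, congrArg Subtype.val hk⟩

theorem maxDivisorAntichain_orderOf_le_cliqueNum (g : G) :
    maxDivisorAntichain (orderOf g) ≤ (deltaGraph G).cliqueNum := by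
  classical
  obtain ⟨A, hAdvd, hanti, hcard⟩ :=
    exists_antichain_card_eq_maxDivisorAntichain (orderOf_pos g).ne'
  set f : ℕ → G := fun d => g ^ (orderOf g / d)
  have horder : ∀ d ∈ A, orderOf (f d) = d := fun d hd =>
    orderOf_pow_orderOf_div (orderOf_pos g).ne' (hAdvd hd)
  have hinj : Set.InjOn f A := fun d hd e he hde => by
    rw [← horder d hd, ← horder e he, hde]
  have hclique : (deltaGraph G).IsClique (A.image f : Set G) := by
    rw [Finset.coe_image]
    rintro _ ⟨d, hd, rfl⟩ _ ⟨e, he, rfl⟩ hne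
    rw [deltaGraph_adj_iff_of_mem_zpowers (npow_mem_zpowers g _) (npow_mem_zpowers g _),
      horder d hd, horder e he]
    have hde : d ≠ e := by rintro rfl; exact hne rfl
    exact ⟨hanti hd he hde, hanti he hd hde.symm⟩
  calc maxDivisorAntichain (orderOf g) = (A.image f).card := by
        rw [Finset.card_image_of_injOn hinj, hcard]
    _ ≤ (deltaGraph G).cliqueNum := hclique.card_le_cliqueNum

theorem exists_cliqueNum_le_maxDivisorAntichain_orderOf :
    ∃ g : G, (deltaGraph G).cliqueNum ≤ maxDivisorAntichain (orderOf g) := by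
  classical
  obtain ⟨s, hs⟩ := (deltaGraph G).exists_isNClique_cliqueNum
  obtain ⟨g, hg⟩ := exists_subset_zpowers_of_isClique hs.isClique
  have hndvd : ∀ x ∈ s, ∀ y ∈ s, x ≠ y → ¬ orderOf x ∣ orderOf y := fun x hx y hy hne =>
    ((deltaGraph_adj_iff_of_mem_zpowers (hg hx) (hg hy)).mp (hs.isClique hx hy hne)).1
  have hinj : Set.InjOn orderOf (s : Set G) := fun x hx y hy h =>
    by_contra fun hne => hndvd x hx y hy hne h.dvd
  refine ⟨g, hs.card_eq ▸ Finset.card_image_of_injOn hinj ▸ ?_⟩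
  refine card_le_maxDivisorAntichain (orderOf_pos g).ne' ?_ ?_
  · rw [Finset.coe_image]
    rintro _ ⟨x, hx, rfl⟩
    exact orderOf_dvd_of_mem_zpowers (hg hx)
  · rw [Finset.coe_image]
    rintro _ ⟨x, hx, rfl⟩ _ ⟨y, hy, rfl⟩ hne
    exact hndvd x hx y hy fun h => hne (h ▸ rfl)

end

theorem stmt_14 {G : Type*} [Group G] [Fintype G] :
    (deltaGraph G).cliqueNum =
      Finset.univ.sup (fun g : G => maxDivisorAntichain (orderOf g)) := by
  obtain ⟨g, hg⟩ := exists_cliqueNum_le_maxDivisorAntichain_orderOf (G := G)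
  exact le_antisymm
    (hg.trans (Finset.le_sup (f := fun g => maxDivisorAntichain (orderOf g)) (Finset.mem_univ g)))
    (Finset.sup_le fun g _ => maxDivisorAntichain_orderOf_le_cliqueNum g)
end

section
/- In the symmetric group S_8, the five elements (1 2), (3 4 5), (6 7), (1 2 3), (4 5 6 7 8) induce a 5-cycle in the graph Δ(S_8), where x ~ y iff ⟨x,y⟩ is cyclic and neither is a power of the other. -/
variable {G : Type*} [Group G] {x y : G}

theorem Commute.mem_zpowers_mul_of_coprime (h : Commute x y)
    (hco : (orderOf x).Coprime (orderOf y)) : x ∈ Subgroup.zpowers (x * y) := by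
  obtain ⟨m, hm⟩ := exists_pow_eq_self_of_coprime hco.symm
  have hpow : (x * y) ^ orderOf y = x ^ orderOf y := by
    rw [h.mul_pow, pow_orderOf_eq_one, mul_one]
  have hmem := Subgroup.pow_mem _ (Subgroup.npow_mem_zpowers (x * y) (orderOf y)) m
  rwa [hpow, hm] at hmem

theorem Commute.closure_pair_eq_zpowers_mul (h : Commute x y)
    (hco : (orderOf x).Coprime (orderOf y)) :
    Subgroup.closure {x, y} = Subgroup.zpowers (x * y) := by
  refine le_antisymm ?_ (Subgroup.zpowers_le.mpr (Subgroup.mul_mem _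
    (Subgroup.subset_closure (by simp)) (Subgroup.subset_closure (by simp))))
  rw [Subgroup.closure_le, Set.insert_subset_iff, Set.singleton_subset_iff]
  exact ⟨h.mem_zpowers_mul_of_coprime hco, h.eq ▸ h.symm.mem_zpowers_mul_of_coprime hco.symm⟩

theorem not_mem_zpowers_of_coprime_orderOf (hco : (orderOf x).Coprime (orderOf y))
    (hx : x ≠ 1) : x ∉ Subgroup.zpowers y := fun hmem =>
  hx (orderOf_eq_one_iff.mp (hco.eq_one_of_dvd (orderOf_dvd_of_mem_zpowers hmem)))

theorem deltaGraph_adj_of_commute_of_coprime (h : Commute x y)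
    (hco : (orderOf x).Coprime (orderOf y)) (hx : x ≠ 1) (hy : y ≠ 1) :
    (deltaGraph G).Adj x y := by
  have hxy := not_mem_zpowers_of_coprime_orderOf hco hx
  refine ⟨fun heq => hxy (heq ▸ Subgroup.mem_zpowers x), ?_, hxy,
    not_mem_zpowers_of_coprime_orderOf hco.symm hy⟩
  rw [h.closure_pair_eq_zpowers_mul hco]
  infer_instance

theorem commute_of_deltaGraph_adj (h : (deltaGraph G).Adj x y) : Commute x y := by
  obtain ⟨-, hcyc, -⟩ := h
  let := hcyc.commGroup
  exact congrArg Subtype.val (mul_comm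
    (⟨x, Subgroup.subset_closure (by simp)⟩ : Subgroup.closure ({x, y} : Set G))
    ⟨y, Subgroup.subset_closure (by simp)⟩)

theorem IsCyclic.mem_zpowers_of_orderOf_eq {α : Type*} [Group α] [Finite α] [IsCyclic α]
    {a b : α} (h : orderOf a = orderOf b) : b ∈ Subgroup.zpowers a := by
  classical
  have : Fintype α := Fintype.ofFinite α
  let S : Finset α := {g | g ^ orderOf a = 1}
  have hsub : (Subgroup.zpowers a : Set α).toFinset ⊆ S := by
    intro g hg
    simpa [S] using orderOf_dvd_iff_pow_eq_one.mp
      (orderOf_dvd_of_mem_zpowers (Set.mem_toFinset.mp hg))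
  have hcard : S.card ≤ (Subgroup.zpowers a : Set α).toFinset.card := by
    rw [Set.toFinset_card, ← Nat.card_eq_fintype_card, SetLike.coe_sort_coe, Nat.card_zpowers]
    exact IsCyclic.card_pow_eq_one_le (orderOf_pos a)
  have hb : b ∈ S := by simp [S, h, pow_orderOf_eq_one]
  rw [← Finset.eq_of_subset_of_card_le hsub hcard] at hb
  simpa using hb

theorem orderOf_ne_of_deltaGraph_adj [Finite G] (h : (deltaGraph G).Adj x y) :
    orderOf x ≠ orderOf y := by
  obtain ⟨-, hcyc, -, hyx⟩ := h
  intro hord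
  let H := Subgroup.closure ({x, y} : Set G)
  let x' : H := ⟨x, Subgroup.subset_closure (by simp)⟩
  let y' : H := ⟨y, Subgroup.subset_closure (by simp)⟩
  obtain ⟨k, hk⟩ := Subgroup.mem_zpowers_iff.mp
    (IsCyclic.mem_zpowers_of_orderOf_eq (a := x') (b := y') (by simpa [x', y'] using hord))
  exact hyx ⟨k, congrArg Subtype.val hk⟩

set_option maxRecDepth 4000 in
/-- The five permutations (1 2), (3 4 5), (6 7), (1 2 3), (4 5 6 7 8) of S₈
(written with `0`-based points) induce a 5-cycle in Δ(S₈). -/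
theorem stmt_15 :
    let a : Equiv.Perm (Fin 8) := c[0, 1]
    let b : Equiv.Perm (Fin 8) := c[2, 3, 4]
    let c : Equiv.Perm (Fin 8) := c[5, 6]
    let d : Equiv.Perm (Fin 8) := c[0, 1, 2]
    let e : Equiv.Perm (Fin 8) := c[3, 4, 5, 6, 7]
    let Δ := deltaGraph (Equiv.Perm (Fin 8))
    (Δ.Adj a b ∧ Δ.Adj b c ∧ Δ.Adj c d ∧ Δ.Adj d e ∧ Δ.Adj e a) ∧
    (¬Δ.Adj a c ∧ ¬Δ.Adj a d ∧ ¬Δ.Adj b d ∧ ¬Δ.Adj b e ∧ ¬Δ.Adj c e) := by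
  intro a b c d e Δ
  have ha : orderOf a = 2 := orderOf_eq_prime (by decide) (by decide)
  have hb : orderOf b = 3 := orderOf_eq_prime (by decide) (by decide)
  have hc : orderOf c = 2 := orderOf_eq_prime (by decide) (by decide)
  have hd : orderOf d = 3 := orderOf_eq_prime (by decide) (by decide)
  have : Fact (Nat.Prime 5) := ⟨by norm_num⟩
  have he : orderOf e = 5 := orderOf_eq_prime (by decide) (by decide)
  refine ⟨⟨?_, ?_, ?_, ?_, ?_⟩,
    fun hac => orderOf_ne_of_deltaGraph_adj hac (ha.trans hc.symm), ?_, ?_, ?_, ?_⟩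
  all_goals first
    | exact deltaGraph_adj_of_commute_of_coprime ((commute_iff_eq _ _).2 (by decide))
        (by simp only [ha, hb, hc, hd, he]; decide) (by decide) (by decide)
    | exact mt commute_of_deltaGraph_adj (by rw [commute_iff_eq]; decide)
end
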